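/- arXiv:1908.02117 — 4 statements merged into one kernel-verified Lean document; each statement's English description precedes it below -/
import Mathlib

section
/- Let φ: A → B be a continuous unital homomorphism of Fréchet ℂ-algebras. Then φ is an epimorphism in the category of Fréchet algebras (i.e., for every Fréchet algebra C and every pair of continuous unital ℂ-algebra homomorphisms ψ, ψ': B → C, the equality ψ ∘ φ = ψ' ∘ φ implies ψ = ψ') if and only if for every Fréchet B-bimodule X the map sending a continuous derivation D: B → X to the continuous derivation D ∘ φ: A → X along φ is injective. -/
/-!
A continuous derivation `D : B → X` into a Fréchet bimodule is the same thing as the continuous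
algebra homomorphism `b ↦ (b, D b)` into the square-zero extension `B ⊕ X`, which is again a
Fréchet algebra; so two derivations agreeing on the image of `φ` give two homomorphisms that agree
after composing with `φ`. Conversely, two homomorphisms `ψ, ψ' : B → C` make `C` a Fréchet
`B`-bimodule through `b • x • b' = ψ b * x * ψ' b'`, and `ψ - ψ'` is a continuous derivation into
it, which vanishes on the image of `φ` as soon as `ψ ∘ φ = ψ' ∘ φ`.
-/

open MulOpposite TopologicalSpace

def IsBimoduleDerivation {B X : Type*} [Mul B] [Add X] [SMul B X] [SMul Bᵐᵒᵖ X] (D : B → X) :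
    Prop :=
  ∀ b c : B, D (b * c) = b • D c + op c • D b

namespace IsBimoduleDerivation

variable {B X : Type*} [Semiring B] [AddCommGroup X] [Module B X] [Module Bᵐᵒᵖ X]

theorem zero : IsBimoduleDerivation (0 : B → X) := fun _ _ => by simp

theorem map_one_eq_zero {D : B → X} (hD : IsBimoduleDerivation D) : D 1 = 0 := by
  simpa using hD 1 1

end IsBimoduleDerivation

namespace TrivSqZeroExt

instance {R M : Type*} [TopologicalSpace R] [TopologicalSpace M] [MetrizableSpace R]
    [MetrizableSpace M] : MetrizableSpace (TrivSqZeroExt R M) :=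
  inferInstanceAs (MetrizableSpace (R × M))

instance {𝕜 R M : Type*} [Semiring 𝕜] [PartialOrder 𝕜] [AddCommMonoid R] [AddCommMonoid M]
    [Module 𝕜 R] [Module 𝕜 M] [TopologicalSpace R] [TopologicalSpace M]
    [LocallyConvexSpace 𝕜 R] [LocallyConvexSpace 𝕜 M] : LocallyConvexSpace 𝕜 (TrivSqZeroExt R M) :=
  inferInstanceAs (LocallyConvexSpace 𝕜 (R × M))

/- The real structure of a complex space is `Module.complexToReal`, which is not reducibly the
componentwise real structure of `TrivSqZeroExt`, so instance search needs this variant. -/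
instance {R M : Type*} [AddCommGroup R] [AddCommGroup M] [Module ℂ R] [Module ℂ M]
    [TopologicalSpace R] [TopologicalSpace M] [LocallyConvexSpace ℝ R] [LocallyConvexSpace ℝ M] :
    @LocallyConvexSpace ℝ (TrivSqZeroExt R M) _ _ _ (Module.complexToReal _) _ :=
  inferInstanceAs (LocallyConvexSpace ℝ (TrivSqZeroExt R M))

variable {R B X : Type*} [CommSemiring R] [Semiring B] [Algebra R B] [AddCommGroup X]
  [Module R X] [Module B X] [Module Bᵐᵒᵖ X] [SMulCommClass B Bᵐᵒᵖ X]
  [IsScalarTower R B X] [IsScalarTower R Bᵐᵒᵖ X]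

def graphAlgHom (D : B →ₗ[R] X) (hD : IsBimoduleDerivation D) : B →ₐ[R] TrivSqZeroExt B X :=
  AlgHom.ofLinearMap
    { toFun b := (b, D b)
      map_add' b c := ext rfl (D.map_add b c)
      map_smul' r b := ext rfl (D.map_smul r b) }
    (ext rfl hD.map_one_eq_zero) (fun b c => ext rfl (hD b c))

theorem continuous_graphAlgHom [TopologicalSpace B] [TopologicalSpace X] {D : B →ₗ[R] X}
    (hD : IsBimoduleDerivation D) (hcont : Continuous D) : Continuous (graphAlgHom D hD) :=
  continuous_id.prodMk hcont

end TrivSqZeroExt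

/-- `C` as a `B`-bimodule, `B` acting on the left through `ψ` and on the right through `ψ'`. -/
def BimoduleVia {R B C : Type*} [CommSemiring R] [Semiring B] [Semiring C] [Algebra R B]
    [Algebra R C] [TopologicalSpace B] [TopologicalSpace C] (_ψ _ψ' : B →A[R] C) : Type _ :=
  C

namespace BimoduleVia

variable {R B C : Type*} [CommRing R] [Ring B] [Ring C] [Algebra R B] [Algebra R C]
  [TopologicalSpace B] [UniformSpace C] (ψ ψ' : B →A[R] C)

instance : AddCommGroup (BimoduleVia ψ ψ') := inferInstanceAs (AddCommGroup C)

instance : Module R (BimoduleVia ψ ψ') := inferInstanceAs (Module R C)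

instance : Module B (BimoduleVia ψ ψ') := Module.compHom C (ψ : B →+* C)

instance : Module Bᵐᵒᵖ (BimoduleVia ψ ψ') := Module.compHom C (ψ' : B →+* C).op

instance : SMulCommClass B Bᵐᵒᵖ (BimoduleVia ψ ψ') :=
  ⟨fun b b' x => (mul_assoc (ψ b) x (ψ' b'.unop)).symm⟩

instance : IsScalarTower R B (BimoduleVia ψ ψ') :=
  ⟨fun r b (x : C) => show ψ (r • b) * x = r • (ψ b * x) by rw [map_smul, smul_mul_assoc]⟩

instance : IsScalarTower R Bᵐᵒᵖ (BimoduleVia ψ ψ') :=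
  ⟨fun r b (x : C) => show x * ψ' (r • b).unop = r • (x * ψ' b.unop) by
    rw [unop_smul, map_smul, mul_smul_comm]⟩

instance : UniformSpace (BimoduleVia ψ ψ') := inferInstanceAs (UniformSpace C)

instance [IsUniformAddGroup C] : IsUniformAddGroup (BimoduleVia ψ ψ') :=
  inferInstanceAs (IsUniformAddGroup C)

instance [CompleteSpace C] : CompleteSpace (BimoduleVia ψ ψ') := inferInstanceAs (CompleteSpace C)

instance [MetrizableSpace C] : MetrizableSpace (BimoduleVia ψ ψ') :=
  inferInstanceAs (MetrizableSpace C)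

instance [TopologicalSpace R] [ContinuousSMul R C] : ContinuousSMul R (BimoduleVia ψ ψ') :=
  inferInstanceAs (ContinuousSMul R C)

instance [IsTopologicalRing C] : ContinuousSMul B (BimoduleVia ψ ψ') :=
  ⟨show Continuous fun p : B × C => ψ p.1 * p.2 from
    (ψ.cont.comp continuous_fst).mul continuous_snd⟩

instance [IsTopologicalRing C] : ContinuousSMul Bᵐᵒᵖ (BimoduleVia ψ ψ') :=
  ⟨show Continuous fun p : Bᵐᵒᵖ × C => p.2 * ψ' p.1.unop from
    continuous_snd.mul (ψ'.cont.comp (continuous_unop.comp continuous_fst))⟩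

variable [IsTopologicalRing C]

def derivation : B →L[R] BimoduleVia ψ ψ' :=
  ψ.toContinuousLinearMap - ψ'.toContinuousLinearMap

theorem derivation_apply_eq_zero_iff (b : B) : derivation ψ ψ' b = 0 ↔ ψ b = ψ' b :=
  show ψ b - ψ' b = 0 ↔ _ from sub_eq_zero

theorem isBimoduleDerivation_derivation : IsBimoduleDerivation (derivation ψ ψ') := by
  intro b c
  show ψ (b * c) - ψ' (b * c) = ψ b * (ψ c - ψ' c) + (ψ b - ψ' b) * ψ' c
  rw [map_mul, map_mul]
  noncomm_ring

instance {B C : Type*} [Ring B] [Ring C] [Algebra ℂ B] [Algebra ℂ C] [TopologicalSpace B]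
    [UniformSpace C] [LocallyConvexSpace ℝ C] (ψ ψ' : B →A[ℂ] C) :
    LocallyConvexSpace ℝ (BimoduleVia ψ ψ') :=
  inferInstanceAs (LocallyConvexSpace ℝ C)

end BimoduleVia

theorem stmt_0_general
    (A B : Type)
    [Ring A] [Algebra ℂ A]
    [Ring B] [Algebra ℂ B] [UniformSpace B] [IsUniformAddGroup B] [IsTopologicalRing B]
    [ContinuousSMul ℂ B] [CompleteSpace B] [TopologicalSpace.MetrizableSpace B]
    [LocallyConvexSpace ℝ B]
    (φ : A →ₐ[ℂ] B) :
    -- `φ` is an epimorphism in the category of Fréchet algebras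
    (∀ (C : Type)
        [Ring C] [Algebra ℂ C] [UniformSpace C] [IsUniformAddGroup C] [IsTopologicalRing C]
        [ContinuousSMul ℂ C] [CompleteSpace C] [TopologicalSpace.MetrizableSpace C]
        [LocallyConvexSpace ℝ C],
      ∀ ψ ψ' : B →ₐ[ℂ] C, Continuous ψ → Continuous ψ' →
        ψ.comp φ = ψ'.comp φ → ψ = ψ') ↔
    -- for every Fréchet `B`-bimodule `X`, restriction of continuous derivations along `φ`
    -- is injective
    (∀ (X : Type)
        [AddCommGroup X] [Module ℂ X] [UniformSpace X] [IsUniformAddGroup X]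
        [ContinuousSMul ℂ X] [CompleteSpace X] [TopologicalSpace.MetrizableSpace X]
        [LocallyConvexSpace ℝ X]
        [Module B X] [Module Bᵐᵒᵖ X] [SMulCommClass B Bᵐᵒᵖ X]
        [IsScalarTower ℂ B X] [IsScalarTower ℂ Bᵐᵒᵖ X]
        [ContinuousSMul B X] [ContinuousSMul Bᵐᵒᵖ X],
      ∀ D D' : B →L[ℂ] X,
        (∀ b c : B, D (b * c) = b • D c + MulOpposite.op c • D b) →
        (∀ b c : B, D' (b * c) = b • D' c + MulOpposite.op c • D' b) →
        (∀ a : A, D (φ a) = D' (φ a)) → D = D') := by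
  refine ⟨fun h X _ _ _ _ _ _ _ _ _ _ _ _ _ _ _ D D' hD hD' hDφ => ?_,
    fun h C _ _ _ _ _ _ _ _ _ ψ ψ' hψ hψ' hψφ => ?_⟩
  · have hgraph := h (TrivSqZeroExt B X)
      (TrivSqZeroExt.graphAlgHom D.toLinearMap hD) (TrivSqZeroExt.graphAlgHom D'.toLinearMap hD')
      (TrivSqZeroExt.continuous_graphAlgHom hD D.continuous)
      (TrivSqZeroExt.continuous_graphAlgHom hD' D'.continuous)
      (AlgHom.ext fun a => TrivSqZeroExt.ext rfl (hDφ a))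
    ext b
    exact congrArg TrivSqZeroExt.snd (AlgHom.congr_fun hgraph b)
  · let Ψ : B →A[ℂ] C := ⟨ψ, hψ⟩
    let Ψ' : B →A[ℂ] C := ⟨ψ', hψ'⟩
    have hzero := h (BimoduleVia Ψ Ψ') (BimoduleVia.derivation Ψ Ψ') 0
      (BimoduleVia.isBimoduleDerivation_derivation Ψ Ψ') IsBimoduleDerivation.zero
      fun a => (BimoduleVia.derivation_apply_eq_zero_iff Ψ Ψ' (φ a)).mpr (AlgHom.congr_fun hψφ a)
    ext b
    exact (BimoduleVia.derivation_apply_eq_zero_iff Ψ Ψ' b).mp (DFunLike.congr_fun hzero b)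

/-- Let `φ : A → B` be a continuous unital homomorphism of Fréchet `ℂ`-algebras (complete
metrizable locally convex topological `ℂ`-algebras with jointly continuous multiplication).
Then `φ` is an epimorphism in the category of Fréchet algebras (for every Fréchet algebra
`C` and continuous unital `ℂ`-algebra homomorphisms `ψ, ψ' : B → C`, `ψ ∘ φ = ψ' ∘ φ`
implies `ψ = ψ'`) if and only if for every Fréchet `B`-bimodule `X` the map sending a
continuous derivation `D : B → X` to the continuous derivation `D ∘ φ : A → X` along `φ` is
injective. -/
theorem stmt_0
    (A B : Type)
    [Ring A] [Algebra ℂ A] [UniformSpace A] [IsUniformAddGroup A] [IsTopologicalRing A]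
    [ContinuousSMul ℂ A] [CompleteSpace A] [TopologicalSpace.MetrizableSpace A]
    [LocallyConvexSpace ℝ A]
    [Ring B] [Algebra ℂ B] [UniformSpace B] [IsUniformAddGroup B] [IsTopologicalRing B]
    [ContinuousSMul ℂ B] [CompleteSpace B] [TopologicalSpace.MetrizableSpace B]
    [LocallyConvexSpace ℝ B]
    (φ : A →ₐ[ℂ] B) (hφ : Continuous φ) :
    -- `φ` is an epimorphism in the category of Fréchet algebras
    (∀ (C : Type)
        [Ring C] [Algebra ℂ C] [UniformSpace C] [IsUniformAddGroup C] [IsTopologicalRing C]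
        [ContinuousSMul ℂ C] [CompleteSpace C] [TopologicalSpace.MetrizableSpace C]
        [LocallyConvexSpace ℝ C],
      ∀ ψ ψ' : B →ₐ[ℂ] C, Continuous ψ → Continuous ψ' →
        ψ.comp φ = ψ'.comp φ → ψ = ψ') ↔
    -- for every Fréchet `B`-bimodule `X`, restriction of continuous derivations along `φ`
    -- is injective
    (∀ (X : Type)
        [AddCommGroup X] [Module ℂ X] [UniformSpace X] [IsUniformAddGroup X]
        [ContinuousSMul ℂ X] [CompleteSpace X] [TopologicalSpace.MetrizableSpace X]
        [LocallyConvexSpace ℝ X]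
        [Module B X] [Module Bᵐᵒᵖ X] [SMulCommClass B Bᵐᵒᵖ X]
        [IsScalarTower ℂ B X] [IsScalarTower ℂ Bᵐᵒᵖ X]
        [ContinuousSMul B X] [ContinuousSMul Bᵐᵒᵖ X],
      ∀ D D' : B →L[ℂ] X,
        (∀ b c : B, D (b * c) = b • D c + MulOpposite.op c • D b) →
        (∀ b c : B, D' (b * c) = b • D' c + MulOpposite.op c • D' b) →
        (∀ a : A, D (φ a) = D' (φ a)) → D = D') :=
  stmt_0_general A B φ
end

section
/- Let A be a commutative Noetherian local ring with maximal ideal m_A and residue field k = A/m_A, and let B be a commutative local ring with maximal ideal m_B which is an A-algebra via a local homomorphism φ: A → B (i.e., φ(m_A) ⊆ m_B). Assume that: (1) B is finitely generated as an A-module; (2) Tor_1^A(B, k) = 0; (3) m_B equals the ideal of B generated by φ(m_A); and (4) B/m_B is one-dimensional as a vector space over k. Then φ: A → B is bijective. -/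
open CategoryTheory IsLocalRing

noncomputable section Stmt2Aux

namespace Stmt2Aux

open CategoryTheory.Limits CategoryTheory.MonoidalCategory TensorProduct

variable {A : Type} [CommRing A] [IsLocalRing A]

/-- The first differential of our resolution. -/
def d10 {n : ℕ} (x : Fin n → A) : ModuleCat.of A (Fin n → A) ⟶ ModuleCat.of A A :=
  ModuleCat.ofHom (Fintype.linearCombination A x : (Fin n → A) →ₗ[A] A)

/-- The augmentation map. -/
def pi0 : ModuleCat.of A A ⟶ ModuleCat.of A (ResidueField A) :=
  ModuleCat.ofHom (Algebra.linearMap A (ResidueField A))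

lemma pi0_apply (a : A) : (pi0 : ModuleCat.of A A ⟶ _) a = residue A a := by
  show algebraMap A (ResidueField A) a = residue A a
  rw [ResidueField.algebraMap_eq]

variable {n : ℕ} (x : Fin n → A)

/-- The resolution complex. -/
def resComplex : ChainComplex (ModuleCat A) ℕ :=
  ChainComplex.mk' (ModuleCat.of A A) (ModuleCat.of A (Fin n → A)) (d10 x)
    (fun f => ⟨_, Projective.d f, (Category.assoc _ _ _).trans ((congrArg _ (kernel.condition f)).trans comp_zero)⟩)

lemma resComplex_d_1_0 : (resComplex x).d 1 0 = d10 x := by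
  simp [resComplex]

instance resComplex_projective (i : ℕ) : Projective ((resComplex x).X i) := by
  obtain (_ | _ | _ | i) := i
  · exact ModuleCat.projective_of_free (Module.Basis.singleton (Fin 1) A)
  · exact ModuleCat.projective_of_free (Pi.basisFun A (Fin n))
  · apply Projective.projective_over
  · apply Projective.projective_over

lemma resComplex_exactAt_succ (i : ℕ) : (resComplex x).ExactAt (i + 1) := by
  rw [HomologicalComplex.exactAt_iff' _ (i + 2) (i + 1) i (by simp) (by simp)]
  refine (ShortComplex.exact_iff_of_iso ?_).1 (exact_d_f ((resComplex x).d (i + 1) i))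
  have : (resComplex x).d (i + 2) (i + 1) = (ChainComplex.mk'XIso (ModuleCat.of A A) (ModuleCat.of A (Fin n → A)) (d10 x)
      (fun f => ⟨_, Projective.d f, (Category.assoc _ _ _).trans ((congrArg _ (kernel.condition f)).trans comp_zero)⟩) i).hom ≫ Projective.d ((resComplex x).d (i + 1) i) :=
    ChainComplex.mk'_d _ _ _ _ i
  refine ShortComplex.isoMk (ChainComplex.mk'XIso (ModuleCat.of A A) (ModuleCat.of A (Fin n → A)) (d10 x)
      (fun f => ⟨_, Projective.d f, (Category.assoc _ _ _).trans ((congrArg _ (kernel.condition f)).trans comp_zero)⟩) i).symm (Iso.refl _) (Iso.refl _) ?_ ?_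
  · have h2 := (Iso.inv_comp_eq _).2 this
    exact h2.trans (Category.comp_id _).symm
  · simp only [Iso.refl_hom, Category.id_comp, Category.comp_id, HomologicalComplex.shortComplexFunctor'_obj_g]
    exact (Category.id_comp _).trans (Category.comp_id _).symm

lemma range_d10 (hx : Submodule.span A (Set.range x) = maximalIdeal A) : LinearMap.range (Fintype.linearCombination A x) = maximalIdeal A := by
  rw [Fintype.range_linearCombination, hx]

lemma d10_comp_pi0 (hx : Submodule.span A (Set.range x) = maximalIdeal A) : d10 x ≫ (pi0 : ModuleCat.of A A ⟶ _) = 0 := by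
  apply ModuleCat.hom_ext
  apply LinearMap.ext
  intro v
  show (pi0 : ModuleCat.of A A ⟶ _) (d10 x v) = 0
  rw [pi0_apply, residue_eq_zero_iff]
  have : d10 x v ∈ LinearMap.range (Fintype.linearCombination A x) :=
    ⟨v, rfl⟩
  rwa [range_d10 x hx] at this

lemma exact10 (hx : Submodule.span A (Set.range x) = maximalIdeal A) : (ShortComplex.mk (d10 x) (pi0 : ModuleCat.of A A ⟶ _)
    (d10_comp_pi0 x hx)).Exact := by
  rw [ShortComplex.moduleCat_exact_iff]
  intro a ha
  let a' : A := a
  have ha' : residue A a' = 0 := by rw [← pi0_apply]; exact ha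
  have : a' ∈ maximalIdeal A := (residue_eq_zero_iff a').1 ha'
  rw [← range_d10 x hx] at this
  exact this

instance epi_pi0 : Epi (pi0 : ModuleCat.of A A ⟶ ModuleCat.of A (ResidueField A)) := by
  rw [ModuleCat.epi_iff_surjective]
  intro y
  obtain ⟨a, ha⟩ := residue_surjective (R := A) y
  exact ⟨a, by rw [pi0_apply, ha]⟩

/-- Our hand-made projective resolution of the residue field. -/
def resolution (hx : Submodule.span A (Set.range x) = maximalIdeal A) : ProjectiveResolution (ModuleCat.of A (ResidueField A)) where
  complex := resComplex x
  π := (ChainComplex.toSingle₀Equiv _ _).symm ⟨pi0, by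
        rw [resComplex_d_1_0]
        exact d10_comp_pi0 x hx⟩
  quasiIso := ⟨fun i => by
    cases i with
    | zero =>
      rw [ChainComplex.quasiIsoAt₀_iff, ShortComplex.quasiIso_iff_of_zeros']
      · refine (ShortComplex.exact_and_epi_g_iff_of_iso ?_).2
          ⟨exact10 x hx, epi_pi0⟩
        refine ShortComplex.isoMk (Iso.refl _) (Iso.refl _) (Iso.refl _) ?_ ?_
        · dsimp
          exact (Category.id_comp _).trans ((resComplex_d_1_0 x).symm.trans (Category.comp_id _).symm)
        · dsimp
          simp [ChainComplex.toSingle₀Equiv, HomologicalComplex.mkHomToSingle, HomologicalComplex.singleObjXIsoOfEq]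
          rfl
      all_goals rfl
    | succ i =>
      rw [quasiIsoAt_iff_exactAt']
      · exact resComplex_exactAt_succ x i
      · apply ChainComplex.exactAt_succ_single_obj⟩

variable {B : Type} [CommRing B] [Algebra A B]

/-- Extraction of the concrete content of the vanishing of `Tor₁(B, k)`. -/
lemma tor_extract (hx : Submodule.span A (Set.range x) = maximalIdeal A)
    (h2 : IsZero (((Tor (ModuleCat A) 1).obj (ModuleCat.of A B)).obj
      (ModuleCat.of A (ResidueField A))))
    (t : B ⊗[A] (Fin n → A))
    (ht : LinearMap.lTensor B (Fintype.linearCombination A x) t = 0) :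
    ∃ (M : ModuleCat.{0} A) (g : M →ₗ[A] (Fin n → A))
      (_ : ∀ m : M, Fintype.linearCombination A x (g m) = 0)
      (s : B ⊗[A] M), LinearMap.lTensor B g s = t := by
  let F : ModuleCat A ⥤ ModuleCat A := (tensoringLeft (ModuleCat A)).obj (ModuleCat.of A B)
  have h2' : IsZero ((F.leftDerived 1).obj (ModuleCat.of A (ResidueField A))) := h2
  let P := resolution x hx
  have hz : IsZero (((F.mapHomologicalComplex _).obj P.complex).homology 1) :=
    h2'.of_iso (P.isoLeftDerivedObj F 1).symm
  have hex := (HomologicalComplex.exactAt_iff_isZero_homology _ 1).2 hz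
  rw [HomologicalComplex.exactAt_iff' _ 2 1 0 (by simp) (by simp)] at hex
  rw [ShortComplex.moduleCat_exact_iff] at hex
  -- identify the complex
  have hd : ((F.mapHomologicalComplex _).obj P.complex).d 1 0 =
      F.map ((resComplex x).d 1 0) := rfl
  have ht' : (((F.mapHomologicalComplex _).obj P.complex).sc' 2 1 0).g t = 0 := by
    show (F.map ((resComplex x).d 1 0)) t = 0
    rw [resComplex_d_1_0]
    exact ht
  obtain ⟨s, hs⟩ := hex t ht'
  refine ⟨(resComplex x).X 2, ((resComplex x).d 2 1).hom, ?_, s, hs⟩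
  intro m
  have := (resComplex x).d_comp_d 2 1 0
  rw [resComplex_d_1_0] at this
  exact LinearMap.congr_fun (congrArg ModuleCat.Hom.hom this) m

section Phi

variable {A B : Type} [CommRing A] [CommRing B] [Algebra A B]
variable (I : Ideal A) (eps : B →ₗ[A] A ⧸ I)

/-- Comparison map `B ⊗ M → M / IM` induced by a linear map `B → A/I`. -/
def phi (M : Type) [AddCommGroup M] [Module A M] :
    B ⊗[A] M →ₗ[A] M ⧸ (I • (⊤ : Submodule A M)) :=
  (TensorProduct.quotTensorEquivQuotSMul M I).toLinearMap ∘ₗ (LinearMap.rTensor M eps)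

lemma phi_tmul (M : Type) [AddCommGroup M] [Module A M] (r : A) (b : B)
    (hb : eps b = Ideal.Quotient.mk I r) (m : M) :
    phi I eps M (b ⊗ₜ[A] m) = Submodule.Quotient.mk (r • m) := by
  simp only [phi, LinearMap.coe_comp, Function.comp_apply, LinearMap.rTensor_tmul,
    LinearEquiv.coe_coe, hb]
  exact TensorProduct.quotTensorEquivQuotSMul_mk_tmul I r m

lemma smul_top_le_comap {M N : Type} [AddCommGroup M] [Module A M] [AddCommGroup N]
    [Module A N] (g : M →ₗ[A] N) :
    I • (⊤ : Submodule A M) ≤ (I • (⊤ : Submodule A N)).comap g := by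
  intro m hm
  have h1 : g m ∈ Submodule.map g (I • (⊤ : Submodule A M)) := Submodule.mem_map_of_mem hm
  rw [Submodule.map_smul''] at h1
  exact Submodule.smul_mono le_rfl le_top h1

lemma phi_natural (M N : Type) [AddCommGroup M] [Module A M] [AddCommGroup N] [Module A N]
    (g : M →ₗ[A] N) :
    phi I eps N ∘ₗ LinearMap.lTensor B g =
      (Submodule.mapQ _ _ g (smul_top_le_comap I g)) ∘ₗ phi I eps M := by
  apply TensorProduct.ext'
  intro b m
  obtain ⟨r, hr⟩ := Ideal.Quotient.mk_surjective (eps b)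
  simp only [LinearMap.coe_comp, Function.comp_apply, LinearMap.lTensor_tmul]
  rw [phi_tmul I eps N r b hr.symm, phi_tmul I eps M r b hr.symm, Submodule.mapQ_apply,
    map_smul]

end Phi

end Stmt2Aux

end Stmt2Aux

open Stmt2Aux in
set_option maxHeartbeats 1000000 in
/-- Let `A` be a commutative Noetherian local ring with maximal ideal `m_A` and residue field
`k = A/m_A`, and let `B` be a commutative local ring which is an `A`-algebra via a local
homomorphism `φ = algebraMap A B`.  If (1) `B` is finitely generated as an `A`-module,
(2) `Tor_1^A(B, k) = 0`, (3) `m_B = B·φ(m_A)`, and (4) `dim_k (B/m_B) = 1`,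
then `φ` is bijective. -/
theorem stmt_2 (A B : Type) [CommRing A] [CommRing B] [IsNoetherianRing A]
    [IsLocalRing A] [IsLocalRing B] [Algebra A B] [IsLocalHom (algebraMap A B)]
    (h1 : Module.Finite A B)
    (h2 : Limits.IsZero
      (((Tor (ModuleCat A) 1).obj (ModuleCat.of A B)).obj
        (ModuleCat.of A (ResidueField A))))
    (h3 : maximalIdeal B = (maximalIdeal A).map (algebraMap A B))
    (h4 : Module.finrank (ResidueField A) (ResidueField B) = 1) :
    Function.Bijective (algebraMap A B) := by
  -- Surjectivity via Nakayama
  have hsurj : Function.Surjective (algebraMap A B) := by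
    have hjac : maximalIdeal A ≤ Ideal.jacobson ⊥ := maximalIdeal_le_jacobson ⊥
    have hle : (⊤ : Submodule A B) ≤
        LinearMap.range (Algebra.linearMap A B) ⊔ (maximalIdeal A) • (⊤ : Submodule A B) := by
      intro b _
      obtain ⟨lam, hlam⟩ := (finrank_eq_one_iff_of_nonzero' (1 : ResidueField B)
        one_ne_zero).1 h4 (residue B b)
      obtain ⟨a, ha⟩ := residue_surjective lam
      have h1' : residue B (algebraMap A B a) = lam • (1 : ResidueField B) := by
        rw [← ha, Algebra.smul_def, mul_one]
        exact (ResidueField.map_residue (algebraMap A B) a).symm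
      have hmem : b - algebraMap A B a ∈ maximalIdeal B := by
        rw [← residue_eq_zero_iff, map_sub, h1', hlam, sub_self]
      rw [h3] at hmem
      have hmem2 : b - algebraMap A B a ∈ (maximalIdeal A) • (⊤ : Submodule A B) := by
        rw [Ideal.smul_top_eq_map]
        exact hmem
      have hb : b = algebraMap A B a + (b - algebraMap A B a) := by ring
      rw [hb]
      exact Submodule.add_mem_sup ⟨a, rfl⟩ hmem2
    have hN := Submodule.le_of_le_smul_of_le_jacobson_bot h1.fg_top hjac hle
    intro b
    obtain ⟨a, ha⟩ := hN (Submodule.mem_top : b ∈ (⊤ : Submodule A B))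
    exact ⟨a, ha⟩
  refine ⟨?_, hsurj⟩
  -- Injectivity
  set I : Ideal A := RingHom.ker (algebraMap A B) with hIdef
  have hIm : I ≤ maximalIdeal A := by
    intro a haI
    by_contra hcon
    have hu : IsUnit a := by
      rwa [mem_maximalIdeal, mem_nonunits_iff, not_not] at hcon
    have hu2 := hu.map (algebraMap A B)
    rw [show algebraMap A B a = 0 from haI] at hu2
    exact not_isUnit_zero hu2
  obtain ⟨n, x, hx⟩ := Submodule.fg_iff_exists_fin_generating_family.mp
    (IsNoetherian.noetherian (maximalIdeal A))
  -- the A-linear inverse of `A/I ≃ B`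
  have hsurj' : Function.Surjective (Algebra.ofId A B) := by
    intro b
    obtain ⟨a, ha⟩ := hsurj b
    exact ⟨a, by rw [Algebra.ofId_apply]; exact ha⟩
  have hker : RingHom.ker (Algebra.ofId A B) = I := by
    ext a
    simp only [RingHom.mem_ker, hIdef, Algebra.ofId_apply]
  let e : (A ⧸ I) ≃ₐ[A] B :=
    (Ideal.quotientEquivAlgOfEq A hker).symm.trans
      (Ideal.quotientKerAlgEquivOfSurjective hsurj')
  let eps : B →ₗ[A] A ⧸ I := e.symm.toLinearMap
  have heps1 : eps (1 : B) = Ideal.Quotient.mk I (1 : A) := by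
    show e.symm 1 = Ideal.Quotient.mk I (1 : A)
    rw [map_one, map_one]
  have key : I ≤ (maximalIdeal A) • I := by
    intro a haI
    have ham : a ∈ maximalIdeal A := hIm haI
    obtain ⟨c, hc⟩ : ∃ c, Fintype.linearCombination A x c = a := by
      rw [← range_d10 x hx] at ham
      exact ham
    have ht : LinearMap.lTensor B (Fintype.linearCombination A x)
        ((1 : B) ⊗ₜ[A] c) = 0 := by
      rw [LinearMap.lTensor_tmul, hc]
      calc (1 : B) ⊗ₜ[A] a = (1 : B) ⊗ₜ[A] (a • (1 : A)) := by rw [smul_eq_mul, mul_one]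
        _ = (a • (1 : B)) ⊗ₜ[A] (1 : A) := (TensorProduct.smul_tmul a (1 : B) (1 : A)).symm
        _ = (algebraMap A B a) ⊗ₜ[A] (1 : A) := by rw [Algebra.algebraMap_eq_smul_one]
        _ = (0 : B) ⊗ₜ[A] (1 : A) := by rw [show algebraMap A B a = 0 from haI]
        _ = 0 := TensorProduct.zero_tmul _ _
    obtain ⟨M, g, hg, s, hs⟩ := tor_extract x hx h2 _ ht
    -- push down to `(Fin n → A) / I(Fin n → A)`
    have hnat := LinearMap.congr_fun (phi_natural I eps M (Fin n → A) g) s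
    simp only [LinearMap.coe_comp, Function.comp_apply] at hnat
    rw [hs] at hnat
    have h1c : phi I eps (Fin n → A) ((1 : B) ⊗ₜ[A] c) =
        Submodule.Quotient.mk c := by
      rw [phi_tmul I eps (Fin n → A) 1 (1 : B) heps1 c, one_smul]
    obtain ⟨w, hw⟩ := Submodule.Quotient.mk_surjective _ (phi I eps M s)
    rw [h1c, ← hw, Submodule.mapQ_apply] at hnat
    -- hnat : mk c = mk (g w)
    have hgc : c - g w ∈ I • (⊤ : Submodule A (Fin n → A)) :=
      (Submodule.Quotient.eq _).mp hnat
    have ha2 : a = Fintype.linearCombination A x (c - g w) := by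
      rw [map_sub, hc, hg w, sub_zero]
    have hmem : Fintype.linearCombination A x (c - g w) ∈
        Submodule.map (Fintype.linearCombination A x) (I • (⊤ : Submodule A (Fin n → A))) :=
      Submodule.mem_map_of_mem hgc
    rw [Submodule.map_smul'', Submodule.map_top, range_d10 x hx] at hmem
    rw [ha2]
    have : I • (maximalIdeal A : Submodule A A) = (maximalIdeal A) • I := by
      rw [smul_eq_mul, smul_eq_mul, mul_comm]
    rwa [this] at hmem
  have hbot : I = ⊥ :=
    Submodule.eq_bot_of_le_smul_of_le_jacobson_bot (maximalIdeal A) I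
      (IsNoetherian.noetherian I) key (maximalIdeal_le_jacobson ⊥)
  exact (RingHom.injective_iff_ker_eq_bot _).2 hbot
end

section
/- Let M be a smooth manifold. Then for every unital ℂ-algebra homomorphism χ: C^∞(M; ℂ) → ℂ there exists a unique point p ∈ M such that χ(f) = f(p) for every f ∈ C^∞(M; ℂ); that is, the map from M to the set of unital ℂ-algebra homomorphisms C^∞(M; ℂ) → ℂ sending a point to evaluation at that point is a bijection. -/
/-!
If a character `χ` of `C^∞(M; ℂ)` took a non-real value `c` on a real-valued function `φ`,
then `φ - c` would be nowhere zero, hence invertible, yet killed by `χ`. So `χ` restricts to a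
character `ψ` of `C^∞(M; ℝ)`, and it suffices to show that `ψ` is evaluation at a point.
Otherwise, for every `p` some `φ` has `ψ φ ≠ φ p`, and `(φ - ψ φ)² ≥ 0` lies in `ker ψ` and is
positive at `p`. For a proper smooth `φ` the same construction gives an element of `ker ψ`
that is positive outside a compact set `K`, and finitely many of the former cover `K`. The sum
of all of them is a nowhere vanishing, hence invertible, element of `ker ψ`: a contradiction.
Uniqueness of the point holds because smooth functions separate points.
-/

open scoped Manifold

/-- `ℂ` is a smooth ring over `ℝ` (with its canonical model `𝓘(ℝ, ℂ)`). -/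
instance : ContMDiffRing 𝓘(ℝ, ℂ) (⊤ : ℕ∞) ℂ where
  contMDiff_add := by
    rw [contMDiff_iff]
    refine ⟨continuous_add, fun x y => ?_⟩
    simp only [mfld_simps, chartAt_self_eq]
    rw [contDiffOn_univ]
    exact contDiff_fst.add contDiff_snd
  contMDiff_mul := by
    rw [contMDiff_iff]
    refine ⟨continuous_mul, fun x y => ?_⟩
    simp only [mfld_simps, chartAt_self_eq]
    rw [contDiffOn_univ]
    exact contDiff_fst.mul contDiff_snd

/-- The algebra `C^∞(M; ℂ)` of smooth complex-valued functions on a smooth manifold `M`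
is a `ℂ`-algebra, with `ℂ` acting by constant functions. -/
noncomputable instance smoothFunctionsComplexAlgebra
    {n : ℕ} (M : Type) [TopologicalSpace M]
    [ChartedSpace (EuclideanSpace ℝ (Fin n)) M] [IsManifold (𝓡 n) (⊤ : ℕ∞) M] :
    Algebra ℂ C^(⊤ : ℕ∞)⟮𝓡 n, M; 𝓘(ℝ, ℂ), ℂ⟯ :=
  RingHom.toAlgebra
    { toFun := fun c => ContMDiffMap.const c
      map_one' := rfl
      map_mul' := fun _ _ => rfl
      map_zero' := rfl
      map_add' := fun _ _ => rfl }

open Set Filter Function Topology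
open scoped ContDiff

namespace ContMDiffMap

section Units

variable {𝕜 : Type*} [NontriviallyNormedField 𝕜]
  {E : Type*} [NormedAddCommGroup E] [NormedSpace 𝕜 E] {H : Type*} [TopologicalSpace H]
  {I : ModelWithCorners 𝕜 E H} {M : Type*} [TopologicalSpace M] [ChartedSpace H M]
  {𝕜' : Type*} [NormedField 𝕜'] [NormedAlgebra 𝕜 𝕜']
  {n : WithTop ℕ∞} [ContMDiffRing 𝓘(𝕜, 𝕜') n 𝕜']

theorem isUnit_of_forall_ne_zero {f : C^n⟮I, M; 𝓘(𝕜, 𝕜'), 𝕜'⟯} (hf : ∀ x, f x ≠ 0) :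
    IsUnit f :=
  IsUnit.of_mul_eq_one
    ⟨fun x => (f x)⁻¹, fun x => (contDiffAt_inv 𝕜 (hf x)).contMDiffAt.comp x (f.contMDiff x)⟩
    (by ext x; exact mul_inv_cancel₀ (hf x))

theorem notMem_ker_of_forall_ne_zero {R F : Type*} [Semiring R] [Nontrivial R]
    [FunLike F C^n⟮I, M; 𝓘(𝕜, 𝕜'), 𝕜'⟯ R] [RingHomClass F C^n⟮I, M; 𝓘(𝕜, 𝕜'), 𝕜'⟯ R]
    (ψ : F) {f : C^n⟮I, M; 𝓘(𝕜, 𝕜'), 𝕜'⟯} (hf : ∀ x, f x ≠ 0) : f ∉ RingHom.ker ψ :=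
  ((isUnit_of_forall_ne_zero hf).map ψ).ne_zero

end Units

section RealCharacters

variable {E : Type*} [NormedAddCommGroup E] [NormedSpace ℝ E]
  {H : Type*} [TopologicalSpace H] {I : ModelWithCorners ℝ E H}
  {M : Type*} [TopologicalSpace M] [ChartedSpace H M]

theorem exists_mem_ideal_pos_on_isCompact {n : WithTop ℕ∞} (J : Ideal C^n⟮I, M; ℝ⟯)
    {K : Set M} (hK : IsCompact K) (h : ∀ p ∈ K, ∃ g ∈ J, (∀ x, 0 ≤ g x) ∧ 0 < g p) :
    ∃ g ∈ J, (∀ x, 0 ≤ g x) ∧ ∀ x ∈ K, 0 < g x := by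
  choose! g hgJ hg0 hgp using h
  obtain ⟨t, htK, hKt⟩ := hK.elim_nhds_subcover (fun p => {x | 0 < g p x})
    fun p hp => (isOpen_lt continuous_const (g p).contMDiff.continuous).mem_nhds (hgp p hp)
  have hsum : ∀ x, (∑ p ∈ t, g p) x = ∑ p ∈ t, g p x := fun x => map_sum (evalRingHom x) g t
  refine ⟨∑ p ∈ t, g p, Ideal.sum_mem J fun p hp => hgJ p (htK p hp), fun x => ?_,
    fun x hx => ?_⟩
  · rw [hsum]
    exact Finset.sum_nonneg fun p hp => hg0 p (htK p hp) x
  · obtain ⟨p, hpt, hpx⟩ := mem_iUnion₂.1 (hKt hx)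
    rw [hsum]
    exact Finset.sum_pos' (fun p hp => hg0 p (htK p hp) x) ⟨p, hpt, hpx⟩

variable {n : WithTop ℕ∞} (ψ : C^n⟮I, M; ℝ⟯ →ₐ[ℝ] ℝ)

theorem exists_mem_ker_apply_eq_sq (φ : C^n⟮I, M; ℝ⟯) :
    ∃ g ∈ RingHom.ker ψ, ∀ x, g x = (φ x - ψ φ) ^ 2 :=
  ⟨(φ - algebraMap ℝ _ (ψ φ)) ^ 2, by simp [RingHom.mem_ker], fun _ => rfl⟩

theorem exists_mem_ker_pos_of_ne {φ : C^n⟮I, M; ℝ⟯} {p : M} (h : ψ φ ≠ φ p) :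
    ∃ g ∈ RingHom.ker ψ, (∀ x, 0 ≤ g x) ∧ 0 < g p := by
  obtain ⟨g, hg, hgx⟩ := exists_mem_ker_apply_eq_sq ψ φ
  exact ⟨g, hg, fun x => hgx x ▸ sq_nonneg _,
    hgx p ▸ pow_two_pos_of_ne_zero (sub_ne_zero.2 h.symm)⟩

variable [FiniteDimensional ℝ E] [IsManifold I ∞ M] [T2Space M] [SigmaCompactSpace M]

theorem exists_tendsto_cocompact_atTop : ∃ φ : C^∞⟮I, M; ℝ⟯, Tendsto φ (cocompact M) atTop := by
  have := Manifold.locallyCompact_of_finiteDimensional (M := M) I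
  let K := CompactExhaustion.choice M
  -- `f m` vanishes on `K m` and equals `1` off `K (m + 1)`, so `∑ᶠ m, f m` is `≥ m` off `K m`.
  choose f hf0 hf1 hf01 using fun m => exists_contMDiffMap_zero_one_of_isClosed I (n := ⊤)
    (K.isCompact m).isClosed isOpen_interior.isClosed_compl
    (disjoint_compl_right_iff_subset.2 (K.subset_interior_succ m))
  have hfin : LocallyFinite fun m => support (f m) := by
    intro x
    refine ⟨interior (K (K.find x + 1)),
      isOpen_interior.mem_nhds (K.subset_interior_succ _ (K.mem_find x)),
      (finite_lt_nat (K.find x + 1)).subset ?_⟩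
    rintro m ⟨y, hy, hyK⟩
    by_contra h
    exact hy (hf0 m (K.subset (not_lt.1 h) (interior_subset hyK)))
  refine ⟨⟨fun x => ∑ᶠ m, f m x, contMDiff_finsum (fun m => (f m).contMDiff) hfin⟩, ?_⟩
  have hle : ∀ (m : ℕ) x, x ∉ K m → (m : ℝ) ≤ ∑ᶠ j, f j x := by
    intro m x hx
    classical
    calc (m : ℝ) = ∑ j ∈ Finset.range m, f j x := by
          rw [Finset.sum_congr rfl fun j hj => hf1 j ?_]
          · simp
          · exact fun hxj => hx (K.subset (Finset.mem_range.1 hj) (interior_subset hxj))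
      _ ≤ ∑ j ∈ Finset.range m ∪ (hfin.point_finite x).toFinset, f j x :=
          Finset.sum_le_sum_of_subset_of_nonneg Finset.subset_union_left
            fun j _ _ => (hf01 j x).1
      _ = ∑ᶠ j, f j x := (finsum_eq_sum_of_support_toFinset_subset _ (hfin.point_finite x)
          Finset.subset_union_right).symm
  refine tendsto_atTop.2 fun r => ?_
  obtain ⟨m, hm⟩ := exists_nat_ge r
  exact mem_cocompact.2 ⟨K m, K.isCompact m, fun x hx => hm.trans (hle m x hx)⟩

theorem exists_mem_ker_pos_off_isCompact (ψ : C^∞⟮I, M; ℝ⟯ →ₐ[ℝ] ℝ) :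
    ∃ K, IsCompact K ∧ ∃ g ∈ RingHom.ker ψ, (∀ x, 0 ≤ g x) ∧ ∀ x ∉ K, 0 < g x := by
  obtain ⟨φ, hφ⟩ := exists_tendsto_cocompact_atTop (I := I) (M := M)
  obtain ⟨g, hg, hgx⟩ := exists_mem_ker_apply_eq_sq ψ φ
  obtain ⟨K, hK, hKφ⟩ := mem_cocompact.1 (hφ.eventually_ge_atTop (ψ φ + 1))
  refine ⟨K, hK, g, hg, fun x => hgx x ▸ sq_nonneg _, fun x hx => hgx x ▸ ?_⟩
  have : ψ φ + 1 ≤ φ x := hKφ hx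
  nlinarith

theorem eq_of_forall_apply_eq {p q : M} (h : ∀ φ : C^∞⟮I, M; ℝ⟯, φ p = φ q) : p = q := by
  by_contra hpq
  obtain ⟨φ, hφp, hφq, -⟩ := exists_contMDiffMap_zero_one_of_isClosed I (n := ⊤)
    isClosed_singleton isClosed_singleton (disjoint_singleton.2 hpq)
  simpa [hφp rfl, hφq rfl] using h φ

theorem exists_eq_eval (ψ : C^∞⟮I, M; ℝ⟯ →ₐ[ℝ] ℝ) : ∃ p, ∀ φ, ψ φ = φ p := by
  by_contra! h
  obtain ⟨K, hK, g₁, hg₁, hg₁0, hg₁pos⟩ := exists_mem_ker_pos_off_isCompact ψ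
  obtain ⟨g₂, hg₂, hg₂0, hg₂pos⟩ := exists_mem_ideal_pos_on_isCompact (RingHom.ker ψ) hK
    fun p _ => (h p).elim fun _ hφ => exists_mem_ker_pos_of_ne ψ hφ
  refine notMem_ker_of_forall_ne_zero ψ (f := g₁ + g₂) (fun x => ?_) (Ideal.add_mem _ hg₁ hg₂)
  by_cases hx : x ∈ K
  · exact (add_pos_of_nonneg_of_pos (hg₁0 x) (hg₂pos x hx)).ne'
  · exact (add_pos_of_pos_of_nonneg (hg₁pos x hx) (hg₂0 x)).ne'

theorem existsUnique_eq_eval (ψ : C^∞⟮I, M; ℝ⟯ →ₐ[ℝ] ℝ) : ∃! p, ∀ φ, ψ φ = φ p :=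
  let ⟨p, hp⟩ := exists_eq_eval ψ
  ⟨p, hp, fun _ hq => eq_of_forall_apply_eq fun φ => (hq φ).symm.trans (hp φ)⟩

end RealCharacters

section Complexification

variable {E : Type*} [NormedAddCommGroup E] [NormedSpace ℝ E]
  {H : Type*} [TopologicalSpace H] {I : ModelWithCorners ℝ E H}
  {M : Type*} [TopologicalSpace M] [ChartedSpace H M]

noncomputable def ofRealHom : C^∞⟮I, M; ℝ⟯ →+* C^∞⟮I, M; 𝓘(ℝ, ℂ), ℂ⟯ :=
  compLeftRingHom I M Complex.ofRealHom Complex.ofRealCLM.contMDiff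

@[simp]
theorem ofRealHom_apply (φ : C^∞⟮I, M; ℝ⟯) (x : M) : ofRealHom φ x = φ x := rfl

end Complexification

section ComplexCharacters

variable {n : ℕ} {M : Type} [TopologicalSpace M] [ChartedSpace (EuclideanSpace ℝ (Fin n)) M]
  [IsManifold (𝓡 n) ∞ M]

@[simp]
theorem algebraMap_complex_apply (c : ℂ) (x : M) :
    algebraMap ℂ C^∞⟮𝓡 n, M; 𝓘(ℝ, ℂ), ℂ⟯ c x = c :=
  rfl

variable (χ : C^∞⟮𝓡 n, M; 𝓘(ℝ, ℂ), ℂ⟯ →ₐ[ℂ] ℂ)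

theorem im_apply_ofRealHom (φ : C^∞⟮𝓡 n, M; ℝ⟯) : (χ (ofRealHom φ)).im = 0 := by
  by_contra h
  refine notMem_ker_of_forall_ne_zero χ (f := ofRealHom φ - algebraMap ℂ _ (χ (ofRealHom φ)))
    (fun x hx => h ?_) (by simp [RingHom.mem_ker])
  simpa using congrArg Complex.im hx

noncomputable def realCharacter : C^∞⟮𝓡 n, M; ℝ⟯ →ₐ[ℝ] ℝ where
  toFun φ := (χ (ofRealHom φ)).re
  map_one' := by simp
  map_mul' φ₁ φ₂ := by simp [Complex.mul_re, im_apply_ofRealHom]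
  map_zero' := by simp
  map_add' φ₁ φ₂ := by simp
  commutes' r := by
    have : ofRealHom (algebraMap ℝ C^∞⟮𝓡 n, M; ℝ⟯ r) = algebraMap ℂ _ (r : ℂ) := rfl
    simp [this]

theorem ofReal_realCharacter (φ : C^∞⟮𝓡 n, M; ℝ⟯) :
    (realCharacter χ φ : ℂ) = χ (ofRealHom φ) :=
  Complex.ext rfl (im_apply_ofRealHom χ φ).symm

theorem forall_eq_eval_iff_realCharacter (p : M) :
    (∀ f, χ f = f p) ↔ ∀ φ, realCharacter χ φ = φ p := by
  refine ⟨fun h φ => by simpa [← ofReal_realCharacter] using h (ofRealHom φ), fun h f => ?_⟩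
  let u : C^∞⟮𝓡 n, M; ℝ⟯ := ⟨fun x => (f x).re, Complex.reCLM.contMDiff.comp f.contMDiff⟩
  let v : C^∞⟮𝓡 n, M; ℝ⟯ := ⟨fun x => (f x).im, Complex.imCLM.contMDiff.comp f.contMDiff⟩
  have hf : f = ofRealHom u + algebraMap ℂ _ Complex.I * ofRealHom v := by
    ext x
    change f x = (f x).re + Complex.I * (f x).im
    rw [mul_comm, Complex.re_add_im]
  calc χ f = realCharacter χ u + Complex.I * realCharacter χ v := by
        rw [ofReal_realCharacter, ofReal_realCharacter, ← Algebra.algebraMap_self_apply Complex.I,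
          ← AlgHom.commutes χ, ← map_mul, ← map_add, ← hf]
    _ = f p := by
        rw [h, h, mul_comm]
        exact Complex.re_add_im (f p)

end ComplexCharacters

end ContMDiffMap

/-- Every unital `ℂ`-algebra homomorphism `χ : C^∞(M; ℂ) → ℂ` on a (finite-dimensional,
Hausdorff, second countable) smooth manifold `M` is evaluation at a unique point `p ∈ M`;
i.e., the map from `M` to the characters of `C^∞(M; ℂ)`, sending a point to evaluation at
that point, is a bijection. -/
theorem stmt_4 {n : ℕ} (M : Type) [TopologicalSpace M] [T2Space M]
    [SecondCountableTopology M]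
    [ChartedSpace (EuclideanSpace ℝ (Fin n)) M] [IsManifold (𝓡 n) (⊤ : ℕ∞) M]
    (χ : C^(⊤ : ℕ∞)⟮𝓡 n, M; 𝓘(ℝ, ℂ), ℂ⟯ →ₐ[ℂ] ℂ) :
    ∃! p : M, ∀ f : C^(⊤ : ℕ∞)⟮𝓡 n, M; 𝓘(ℝ, ℂ), ℂ⟯, χ f = f p := by
  have := Manifold.locallyCompact_of_finiteDimensional (M := M) (𝓡 n)
  simp only [ContMDiffMap.forall_eq_eval_iff_realCharacter]
  exact ContMDiffMap.existsUnique_eq_eval (ContMDiffMap.realCharacter χ)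
end

section
/- Let (F_m) be a sequence of functions ℂ → ℂ such that each F_m is a finite sum F_m = Σ_{i=1}^{k_m} f_{m,i}·g_{m,i}, where all the functions f_{m,i} and g_{m,i} are entire and vanish at 0. If (F_m) converges locally uniformly on ℂ to a function h, then h is entire and satisfies h(0) = 0 and h'(0) = 0. In particular, the identity function z ↦ z is not the locally uniform limit on ℂ of any such sequence of finite sums of products of entire functions vanishing at 0. -/
/-- Let `(F_m)` be a sequence of functions `ℂ → ℂ`, each of which is a finite sum
`F_m = Σᵢ f_{m,i}·g_{m,i}` of products of entire functions vanishing at `0`.  If `(F_m)`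
converges locally uniformly on `ℂ` to `h`, then `h` is entire with `h(0) = 0` and
`h'(0) = 0`; in particular `h` is not the identity function `z ↦ z`. -/
theorem stmt_9 (F : ℕ → ℂ → ℂ)
    (hF : ∀ m : ℕ, ∃ (k : ℕ) (f g : Fin k → ℂ → ℂ),
      (∀ i, Differentiable ℂ (f i)) ∧ (∀ i, Differentiable ℂ (g i)) ∧
      (∀ i, f i 0 = 0) ∧ (∀ i, g i 0 = 0) ∧
      ∀ z : ℂ, F m z = ∑ i, f i z * g i z)
    (h : ℂ → ℂ)
    (hconv : TendstoLocallyUniformly F h Filter.atTop) :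
    Differentiable ℂ h ∧ h 0 = 0 ∧ deriv h 0 = 0 ∧ h ≠ fun z : ℂ => z := by
  -- key facts about each F m
  have key : ∀ m : ℕ, Differentiable ℂ (F m) ∧ F m 0 = 0 ∧ deriv (F m) 0 = 0 := by
    intro m
    obtain ⟨k, f, g, hfd, hgd, hf0, hg0, hsum⟩ := hF m
    have hFeq : F m = fun z => ∑ i, f i z * g i z := funext hsum
    have hdiff : Differentiable ℂ (F m) := by
      rw [hFeq]
      exact Differentiable.fun_sum fun i _ => (hfd i).mul (hgd i)
    refine ⟨hdiff, by rw [hFeq]; simp [hf0, hg0], ?_⟩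
    rw [hFeq]
    rw [deriv_fun_sum (A := fun i z => f i z * g i z) (fun i _ => ((hfd i).mul (hgd i)).differentiableAt)]
    refine Finset.sum_eq_zero fun i _ => ?_
    rw [deriv_fun_mul (hfd i).differentiableAt (hgd i).differentiableAt, hf0 i, hg0 i]
    ring
  have hconvOn : TendstoLocallyUniformlyOn F h Filter.atTop Set.univ :=
    (tendstoLocallyUniformlyOn_univ).2 hconv
  have hdiffOn : DifferentiableOn ℂ h Set.univ :=
    hconvOn.differentiableOn (Filter.Eventually.of_forall fun m => (key m).1.differentiableOn)
      isOpen_univ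
  have hdiff : Differentiable ℂ h := fun z => (hdiffOn z trivial).differentiableAt
    (Filter.univ_mem)
  have h0 : h 0 = 0 := by
    have : Filter.Tendsto (fun m => F m 0) Filter.atTop (nhds (h 0)) :=
      hconvOn.tendsto_at (Set.mem_univ (0 : ℂ))
    have heq : (fun m => F m 0) = fun _ => (0 : ℂ) := funext fun m => (key m).2.1
    rw [heq] at this
    exact tendsto_nhds_unique this tendsto_const_nhds
  have hderivOn := hconvOn.deriv (Filter.Eventually.of_forall fun m => (key m).1.differentiableOn)
    isOpen_univ
  have hd0 : deriv h 0 = 0 := by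
    have := hderivOn.tendsto_at (Set.mem_univ (0 : ℂ))
    have heq : (fun m => (deriv ∘ F) m 0) = fun _ => (0 : ℂ) :=
      funext fun m => (key m).2.2
    rw [show ((deriv ∘ F) · (0:ℂ)) = fun m => (deriv ∘ F) m 0 from rfl, heq] at this
    exact tendsto_nhds_unique this tendsto_const_nhds
  refine ⟨hdiff, h0, hd0, fun heq => ?_⟩
  have : deriv h 0 = 1 := by rw [heq]; simp
  rw [hd0] at this
  exact one_ne_zero this.symm
end
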